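/- For a commutative ring R with 1 ≠ 0, Γ̃(R) = Z*(Γ(R)) if and only if T(R) is indecomposable, equivalently, T(R) has no idempotents other than 0 and 1. -/

import Mathlib

/-- x is a zero-divisor (including 0 in a nontrivial ring). -/
def IsZD {R : Type} [CommRing R] (x : R) : Prop := ∃ y : R, y ≠ 0 ∧ x * y = 0

/-- Adjacency relation of the graph Γ̃(R): xy = 0 or x + y ∈ Z(R). -/
def GTAdj {R : Type} [CommRing R] (x y : R) : Prop := x * y = 0 ∨ IsZD (x + y)

/-- Γ̃(R) is a complete graph: any two distinct nonzero zero-divisors are adjacent. -/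
def GTComplete (R : Type) [CommRing R] : Prop :=
  ∀ x y : R, IsZD x → x ≠ 0 → IsZD y → y ≠ 0 → x ≠ y → GTAdj x y

/-- Auxiliary: R is isomorphic to A × B with A, B nonzero rings. -/
def DecomposesAsAux (R A B : Type) [CommRing R] [CommRing A] [CommRing B] : Prop :=
  Nontrivial A ∧ Nontrivial B ∧ Nonempty (R ≃+* A × B)

/-- R is decomposable: isomorphic to a direct product of two nonzero rings. -/
def IsDecomposableRing (R : Type) [iR : CommRing R] : Prop :=
  ∃ (A B : Type) (iA : CommRing A) (iB : CommRing B), @DecomposesAsAux R A B iR iA iB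

/-- Γ̃(R) = Γ(R): distinct nonzero zero-divisors are adjacent in Γ̃(R) iff
they are adjacent in the zero-divisor graph Γ(R). -/
def TildeEqGamma (R : Type) [CommRing R] : Prop :=
  ∀ x y : R, IsZD x → x ≠ 0 → IsZD y → y ≠ 0 → x ≠ y →
    ((x * y = 0 ∨ IsZD (x + y)) ↔ x * y = 0)

/-- Γ̃(R) = Z*(Γ(R)): distinct nonzero zero-divisors are adjacent in Γ̃(R) iff
they are adjacent in the total graph restricted to Z(R)*. -/
def TildeEqZStar (R : Type) [CommRing R] : Prop :=
  ∀ x y : R, IsZD x → x ≠ 0 → IsZD y → y ≠ 0 → x ≠ y →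
    ((x * y = 0 ∨ IsZD (x + y)) ↔ IsZD (x + y))

/-! An element `e = x / s` of the total ring of fractions is idempotent iff `x (s - x) = 0`. So
nontrivial idempotents of `T(R)` are the same as splittings `s = x + y` of a non-zero-divisor into
nonzero `x, y` with `xy = 0`, and these are exactly the pairs of vertices adjacent in `Γ̃(R)` but
not in `Z*(Γ(R))`. A nontrivial idempotent `e` splits a ring as `R ⧸ (e) × R ⧸ (1 - e)`. -/

open IsLocalization nonZeroDivisors

lemma isDecomposableRing_iff_exists_isIdempotentElem (S : Type) [CommRing S] :
    IsDecomposableRing S ↔ ∃ e : S, IsIdempotentElem e ∧ e ≠ 0 ∧ e ≠ 1 := by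
  constructor
  · rintro ⟨A, B, _, _, _, _, ⟨f⟩⟩
    have hidem : IsIdempotentElem ((1, 0) : A × B) := by simp [IsIdempotentElem]
    refine ⟨f.symm (1, 0), hidem.map f.symm, ?_, ?_⟩
    · rw [Ne, map_eq_zero_iff _ f.symm.injective]
      simp
    · rw [Ne, ← map_one f.symm, f.symm.injective.eq_iff]
      simp [Prod.ext_iff]
  · rintro ⟨e, he, he0, he1⟩
    have quotient_nontrivial : ∀ {f : S}, IsIdempotentElem f → f ≠ 1 →
        Nontrivial (S ⧸ Ideal.span {f}) := fun hf hf1 => by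
      rw [Ideal.Quotient.nontrivial_iff, Ne, Ideal.span_singleton_eq_top]
      exact fun hu => hf1 ((IsIdempotentElem.iff_eq_one_of_isUnit hu).mp hf)
    exact ⟨_, _, _, _, quotient_nontrivial he he1,
      quotient_nontrivial he.one_sub (by rwa [Ne, sub_eq_self]),
      ⟨(AlgEquiv.prodQuotientOfIsIdempotentElem ℤ he he.one_sub (add_sub_cancel e 1)
        (by rw [mul_sub, mul_one, he.eq, sub_self])).toRingEquiv⟩⟩

section FractionRing

variable {R K : Type*} [CommRing R] [CommRing K] [Algebra R K] [IsFractionRing R K]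

lemma IsFractionRing.mk'_left_inj {x y : R} (s : R⁰) : mk' K x s = mk' K y s ↔ x = y := by
  rw [mk'_eq_iff_eq, (IsFractionRing.injective R K).eq_iff, mul_cancel_left_coe_nonZeroDivisors]

lemma IsFractionRing.isIdempotentElem_mk'_iff (x : R) (s : R⁰) :
    IsIdempotentElem (mk' K x s) ↔ x * (s - x) = 0 := by
  have hden : mk' K (x * s) (s * s) = mk' K x s := by rw [mk'_mul, mk'_self', mul_one]
  rw [IsIdempotentElem, ← mk'_mul, ← hden, IsFractionRing.mk'_left_inj, mul_sub, sub_eq_zero,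
    eq_comm]

lemma IsFractionRing.mk'_eq_one_iff {x : R} (s : R⁰) : mk' K x s = 1 ↔ x = s := by
  rw [← mk'_self' (S := K) (x := s), IsFractionRing.mk'_left_inj]

lemma IsFractionRing.exists_isIdempotentElem_ne_zero_ne_one_iff :
    (∃ e : K, IsIdempotentElem e ∧ e ≠ 0 ∧ e ≠ 1) ↔
      ∃ x y : R, x * y = 0 ∧ x + y ∈ R⁰ ∧ x ≠ 0 ∧ y ≠ 0 := by
  constructor
  · rintro ⟨e, he, he0, he1⟩
    obtain ⟨x, s, rfl⟩ := exists_mk'_eq R⁰ e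
    refine ⟨x, s - x, (isIdempotentElem_mk'_iff x s).mp he, by simp, ?_, ?_⟩
    · exact fun hx => he0 (by rw [hx, mk'_zero])
    · exact fun hsx => he1 ((mk'_eq_one_iff s).mpr (sub_eq_zero.mp hsx).symm)
  · rintro ⟨x, y, hxy, hs, hx, hy⟩
    refine ⟨mk' K x ⟨x + y, hs⟩, ?_, ?_, ?_⟩
    · rwa [isIdempotentElem_mk'_iff, add_sub_cancel_left]
    · rwa [Ne, ← mk'_zero (S := K) ⟨x + y, hs⟩, mk'_left_inj]
    · rwa [Ne, mk'_eq_one_iff (K := K), left_eq_add]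

end FractionRing

lemma isZD_iff_notMem_nonZeroDivisors {R : Type} [CommRing R] {x : R} : IsZD x ↔ x ∉ R⁰ := by
  simp [IsZD, mem_nonZeroDivisors_iff_left, and_comm]

lemma tildeEqZStar_iff (R : Type) [CommRing R] :
    TildeEqZStar R ↔ ¬ ∃ x y : R, x * y = 0 ∧ x + y ∈ R⁰ ∧ x ≠ 0 ∧ y ≠ 0 := by
  simp only [TildeEqZStar, isZD_iff_notMem_nonZeroDivisors]
  constructor
  · rintro h ⟨x, y, hxy, hs, hx, hy⟩
    have hne : x ≠ y := by
      rintro rfl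
      exact hx ((mul_left_mem_nonZeroDivisors_eq_zero_iff hs).mp (by linear_combination 2 * hxy))
    have hx' : x ∉ R⁰ := fun h => hy ((mul_left_mem_nonZeroDivisors_eq_zero_iff h).mp hxy)
    have hy' : y ∉ R⁰ := fun h => hx ((mul_right_mem_nonZeroDivisors_eq_zero_iff h).mp hxy)
    exact (h x y hx' hx hy' hy hne).mp (Or.inl hxy) hs
  · intro h x y _ hx _ hy _
    refine ⟨?_, Or.inr⟩
    rintro (hxy | hs)
    · exact fun hs => h ⟨x, y, hxy, hs, hx, hy⟩
    · exact hs

theorem stmt13_general (R : Type) [CommRing R] :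
    (TildeEqZStar R ↔ ¬ IsDecomposableRing (FractionRing R)) ∧
    (TildeEqZStar R ↔ ∀ e : FractionRing R, e * e = e → e = 0 ∨ e = 1) := by
  have no_idempotents_iff : (∀ e : FractionRing R, e * e = e → e = 0 ∨ e = 1) ↔
      ¬ ∃ e : FractionRing R, IsIdempotentElem e ∧ e ≠ 0 ∧ e ≠ 1 := by
    simp only [IsIdempotentElem, not_exists, not_and, not_not, or_iff_not_imp_left]
  rw [no_idempotents_iff, isDecomposableRing_iff_exists_isIdempotentElem,
    IsFractionRing.exists_isIdempotentElem_ne_zero_ne_one_iff (R := R),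
    tildeEqZStar_iff]
  exact ⟨.rfl, .rfl⟩

theorem stmt13 (R : Type) [CommRing R] [Nontrivial R] :
    (TildeEqZStar R ↔ ¬ IsDecomposableRing (FractionRing R)) ∧
    (TildeEqZStar R ↔ ∀ e : FractionRing R, e * e = e → e = 0 ∨ e = 1) :=
  stmt13_general R
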